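/- Let λ ∈ (0,1). Then ∑_{x=2}^∞ ((x-1)^{x-2}/(x-2)!) λ^x e^{-xλ} = λ e^{-λ}/(1-λ) − λ e^{-λ}. -/

import Mathlib

/-!
With `t = λe^{-λ}` the series is `t · ∑_{n ≥ 1} nⁿ tⁿ / n!`, so everything rests on
`∑_{n ≥ 0} nⁿ (λe^{-λ})ⁿ / n! = 1/(1 - λ)` for `0 ≤ λ < 1`. For small `λ`, expanding each
`e^{-nλ}` gives an absolutely convergent double series whose `N`-th antidiagonal sum is
`λᴺ/N! · ∑ₖ (-1)^{N-k} C(N,k) kᴺ = λᴺ`, the inner sum being the `N`-th forward difference of `xᴺ`.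
Since `λe^{-λ} < 1/e` for `λ ≠ 1` and the series `∑ nⁿ tⁿ / n!` has radius at least `1/e`, both
sides are analytic on `[0, 1)`, and the identity propagates from a neighbourhood of `0`.
-/

open Finset Real Filter Topology
open scoped Nat

theorem sum_range_neg_one_pow_mul_choose_mul_pow_self {R : Type*} [CommRing R] (n : ℕ) :
    ∑ k ∈ range (n + 1), (-1 : R) ^ (n - k) * n.choose k * (k : R) ^ n = n ! := by
  have h := fwdDiff_iter_eq_sum_shift (h := (1 : R)) (fun r : R => r ^ n) n 0
  rw [fwdDiff_iter_eq_factorial] at h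
  simpa [zsmul_eq_mul] using h.symm

theorem sum_antidiagonal_neg_one_pow_mul_pow_div_factorial_mul_factorial {K : Type*} [Field K]
    [CharZero K] (n : ℕ) :
    ∑ p ∈ antidiagonal n, (-1 : K) ^ p.2 * (p.1 : K) ^ n / (p.1 ! * p.2 !) = 1 := by
  rw [Nat.sum_antidiagonal_eq_sum_range_succ (fun k m => (-1 : K) ^ m * (k : K) ^ n / (k ! * m !))]
  have hn : (n ! : K) ≠ 0 := Nat.cast_ne_zero.2 n.factorial_ne_zero
  rw [← mul_right_inj' hn, mul_one, mul_sum]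
  nth_rw 2 [← sum_range_neg_one_pow_mul_choose_mul_pow_self]
  refine sum_congr rfl fun k hk => ?_
  rw [Nat.cast_choose K (Nat.le_of_lt_succ (mem_range.1 hk))]
  field_simp

theorem tsum_prod_eq_tsum_sum_antidiagonal {α A : Type*} [AddCommMonoid α] [TopologicalSpace α]
    [ContinuousAdd α] [T3Space α] [AddCommMonoid A] [HasAntidiagonal A] {f : A × A → α}
    (hf : Summable f) : ∑' p, f p = ∑' n, ∑ p ∈ antidiagonal n, f p := by
  rw [← HasAntidiagonal.sigmaAntidiagonalEquivProd.tsum_eq f]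
  conv_rhs => congr; ext; rw [← Finset.sum_finset_coe, ← tsum_fintype (L := .unconditional _)]
  exact (HasAntidiagonal.sigmaAntidiagonalEquivProd.summable_iff.mpr hf).tsum_sigma'
    fun n ↦ (hasSum_fintype _).summable

theorem tsum_pow_div_factorial (y : ℝ) : ∑' m : ℕ, y ^ m / m ! = exp y := by
  rw [exp_eq_exp_ℝ, NormedSpace.exp_eq_tsum_div]

theorem mul_exp_neg_lt_exp_neg_one {x : ℝ} (hx : x ≠ 1) : x * exp (-x) < exp (-1) := by
  have h := add_one_lt_exp (sub_ne_zero.2 hx)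
  rw [sub_add_cancel] at h
  calc x * exp (-x) < exp (x - 1) * exp (-x) := mul_lt_mul_of_pos_right h (exp_pos _)
    _ = exp (-1) := by rw [← exp_add]; ring_nf

noncomputable def selfPowSeries : FormalMultilinearSeries ℝ ℝ ℝ :=
  FormalMultilinearSeries.ofScalars ℝ fun n => (n : ℝ) ^ n / n !

theorem selfPowSeries_sum (t : ℝ) :
    selfPowSeries.sum t = ∑' n : ℕ, (n : ℝ) ^ n / n ! * t ^ n := by
  simp [selfPowSeries, ← FormalMultilinearSeries.ofScalarsSum.eq_1,
    FormalMultilinearSeries.ofScalars_sum_eq]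

theorem summable_pow_self_div_factorial_mul_pow {t : ℝ} (ht : |t| < exp (-1)) :
    Summable fun n : ℕ => (n : ℝ) ^ n / n ! * t ^ n := by
  have hq : |t| * exp 1 < 1 := by
    rwa [← lt_div_iff₀ (exp_pos 1), one_div, ← exp_neg]
  refine Summable.of_norm_bounded (summable_geometric_of_lt_one (by positivity) hq) fun n => ?_
  calc ‖(n : ℝ) ^ n / n ! * t ^ n‖ = (n : ℝ) ^ n / n ! * |t| ^ n := by
        rw [norm_mul, norm_pow, norm_of_nonneg (by positivity), norm_eq_abs]
    _ ≤ exp n * |t| ^ n := by gcongr; exact pow_div_factorial_le_exp (n : ℝ) (by positivity) n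
    _ = (|t| * exp 1) ^ n := by rw [← exp_one_pow, mul_pow, mul_comm]

theorem ofReal_exp_neg_one_le_radius_selfPowSeries :
    ENNReal.ofReal (exp (-1)) ≤ selfPowSeries.radius := by
  refine ENNReal.le_of_forall_nnreal_lt fun r hr => selfPowSeries.le_radius_of_summable ?_
  have hr' : |(r : ℝ)| < exp (-1) := by
    rwa [NNReal.abs_eq, ← ENNReal.ofReal_lt_ofReal_iff (exp_pos _), ENNReal.ofReal_coe_nnreal]
  simpa [selfPowSeries, FormalMultilinearSeries.ofScalars_norm]
    using summable_pow_self_div_factorial_mul_pow hr'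

theorem analyticAt_selfPowSeries_sum {t : ℝ} (ht : |t| < exp (-1)) :
    AnalyticAt ℝ selfPowSeries.sum t := by
  have hrad := ofReal_exp_neg_one_le_radius_selfPowSeries
  refine (selfPowSeries.hasFPowerSeriesOnBall ?_).analyticAt_of_mem ?_
  · exact lt_of_lt_of_le (ENNReal.ofReal_pos.2 (exp_pos _)) hrad
  · rw [Metric.mem_eball, edist_zero_right, enorm_eq_ofReal_abs]
    exact lt_of_lt_of_le ((ENNReal.ofReal_lt_ofReal_iff (exp_pos _)).2 ht) hrad

theorem summable_pow_self_div_factorial_mul_pow_mul_pow_div_factorial {x : ℝ}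
    (hx : |x| * exp |x| < exp (-1)) :
    Summable fun p : ℕ × ℕ => (p.1 : ℝ) ^ p.1 / p.1 ! * x ^ p.1 * ((-p.1 * x) ^ p.2 / p.2 !) := by
  refine Summable.of_norm_bounded (g := fun p : ℕ × ℕ =>
    (p.1 : ℝ) ^ p.1 / p.1 ! * |x| ^ p.1 * ((p.1 * |x|) ^ p.2 / p.2 !)) ?_ fun p => by simp
  refine (summable_prod_of_nonneg fun p => ?_).2 ⟨fun n => ?_, ?_⟩
  · dsimp only [Pi.zero_apply]
    positivity
  · dsimp only
    exact (Real.summable_pow_div_factorial _).mul_left _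
  dsimp only
  have hrow (n : ℕ) : ∑' m : ℕ, (n : ℝ) ^ n / n ! * |x| ^ n * ((n * |x|) ^ m / m !)
      = (n : ℝ) ^ n / n ! * (|x| * exp |x|) ^ n := by
    rw [tsum_mul_left, tsum_pow_div_factorial, exp_nat_mul, mul_pow, mul_assoc]
  simp_rw [hrow]
  exact summable_pow_self_div_factorial_mul_pow
    (by rwa [abs_of_nonneg (by positivity : 0 ≤ |x| * exp |x|)])

theorem selfPowSeries_sum_mul_exp_neg_of_abs_mul_exp_abs_lt {x : ℝ}
    (hx : |x| * exp |x| < exp (-1)) : selfPowSeries.sum (x * exp (-x)) = (1 - x)⁻¹ := by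
  set f : ℕ × ℕ → ℝ := fun p => (p.1 : ℝ) ^ p.1 / p.1 ! * x ^ p.1 * ((-p.1 * x) ^ p.2 / p.2 !)
  have hf : Summable f := summable_pow_self_div_factorial_mul_pow_mul_pow_div_factorial hx
  have hrows : ∑' p, f p = ∑' n : ℕ, (n : ℝ) ^ n / n ! * (x * exp (-x)) ^ n := by
    rw [hf.tsum_prod]
    refine tsum_congr fun n => ?_
    simp only [f]
    rw [tsum_mul_left, tsum_pow_div_factorial, neg_mul, ← mul_neg, exp_nat_mul, mul_pow]
    ring
  have hdiag (N : ℕ) : ∀ p ∈ antidiagonal N,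
      f p = x ^ N * ((-1 : ℝ) ^ p.2 * (p.1 : ℝ) ^ N / (p.1 ! * p.2 !)) := by
    rintro ⟨k, m⟩ hkm
    rw [← mem_antidiagonal.1 hkm]
    simp only [f, neg_mul, neg_pow (_ * x), mul_pow, pow_add]
    field_simp
  have hx1 : |x| < 1 := calc
    |x| ≤ |x| * exp |x| := le_mul_of_one_le_right (abs_nonneg x) (one_le_exp (abs_nonneg x))
    _ < exp (-1) := hx
    _ < 1 := exp_lt_one_iff.2 (by norm_num)
  rw [selfPowSeries_sum, ← hrows, tsum_prod_eq_tsum_sum_antidiagonal hf,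
    ← tsum_geometric_of_abs_lt_one hx1]
  refine tsum_congr fun N => ?_
  rw [sum_congr rfl (hdiag N), ← mul_sum,
    sum_antidiagonal_neg_one_pow_mul_pow_div_factorial_mul_factorial, mul_one]

theorem selfPowSeries_sum_mul_exp_neg {x : ℝ} (hx0 : 0 ≤ x) (hx1 : x < 1) :
    selfPowSeries.sum (x * exp (-x)) = (1 - x)⁻¹ := by
  have hF : AnalyticOnNhd ℝ (fun y => selfPowSeries.sum (y * exp (-y))) (Set.Ico 0 1) :=
    fun y hy => (analyticAt_selfPowSeries_sum <| by
      rw [abs_of_nonneg (mul_nonneg hy.1 (exp_pos _).le)]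
      exact mul_exp_neg_lt_exp_neg_one hy.2.ne).comp (analyticAt_id.mul analyticAt_id.neg.rexp)
  have hG : AnalyticOnNhd ℝ (fun y : ℝ => (1 - y)⁻¹) (Set.Ico 0 1) := fun y hy =>
    (analyticAt_const.sub analyticAt_id).inv (sub_ne_zero.2 hy.2.ne')
  have hsmall : ∀ᶠ y in 𝓝 (0 : ℝ), |y| * exp |y| < exp (-1) :=
    (continuous_abs.mul (continuous_exp.comp continuous_abs)).continuousAt.eventually_lt
      continuousAt_const (by simp [exp_pos])
  exact hF.eqOn_of_preconnected_of_eventuallyEq hG (convex_Ico 0 1).isPreconnected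
    ⟨le_rfl, one_pos⟩ (hsmall.mono fun y => selfPowSeries_sum_mul_exp_neg_of_abs_mul_exp_abs_lt)
    ⟨hx0, hx1⟩

/-- First-moment series identity: for `0 < λ < 1`,
`∑_{x=2}^∞ ((x-1)^{x-2}/(x-2)!) λ^x e^{-xλ} = λe^{-λ}/(1-λ) - λe^{-λ}`
(indexed by `x = k + 2`). -/
theorem stmt10 (lam : ℝ) (h0 : 0 < lam) (h1 : lam < 1) :
    ∑' k : ℕ,
      ((((k + 1 : ℕ) ^ k : ℕ)) : ℝ) / (Nat.factorial k)
        * lam ^ (k + 2) * Real.exp (-((k + 2 : ℕ) : ℝ) * lam)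
    = lam * Real.exp (-lam) / (1 - lam) - lam * Real.exp (-lam) := by
  set t := lam * exp (-lam)
  have hterm (k : ℕ) : (((k + 1 : ℕ) ^ k : ℕ) : ℝ) / k ! * lam ^ (k + 2)
        * exp (-((k + 2 : ℕ) : ℝ) * lam)
      = t * (((k + 1 : ℕ) : ℝ) ^ (k + 1) / (k + 1)! * t ^ (k + 1)) := by
    rw [neg_mul, ← mul_neg, exp_nat_mul, Nat.factorial_succ]
    push_cast
    field_simp
    ring
  have hsum : Summable fun n : ℕ => (n : ℝ) ^ n / n ! * t ^ n :=
    summable_pow_self_div_factorial_mul_pow <| by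
      rw [abs_of_pos (by positivity)]
      exact mul_exp_neg_lt_exp_neg_one h1.ne
  have hshift := hsum.tsum_eq_zero_add
  rw [← selfPowSeries_sum, selfPowSeries_sum_mul_exp_neg h0.le h1] at hshift
  rw [tsum_congr hterm, tsum_mul_left, div_eq_mul_inv, hshift, pow_zero, pow_zero,
    Nat.factorial_zero, Nat.cast_one, div_one, one_mul]
  ring
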